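/- For every λ ∈ ℂ, the discrete Wronskian of the solutions I^+(λ) and I^−(λ), namely √n (I_n^+(λ) I_{n+1}^−(λ) − I_{n+1}^+(λ) I_n^−(λ)), equals i e^{λ²/2}/√(2π) (in particular it is independent of n and nonzero, so I^+ and I^− are linearly independent). -/

import Mathlib

open Complex

/-- The complementary error function, extended to `ℂ`:
`erfc z = (2/√π) ∫_0^∞ e^{-(z+t)²} dt`. -/
noncomputable def cerfc (z : ℂ) : ℂ :=
  (2 / (Real.sqrt Real.pi : ℂ)) * ∫ t in Set.Ioi (0 : ℝ), Complex.exp (-(z + (t : ℂ)) ^ 2)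

/-- The Faddeeva (error) function `w(z) = e^{-z²} erfc(-iz)`. -/
noncomputable def faddeeva (z : ℂ) : ℂ := Complex.exp (-z ^ 2) * cerfc (-I * z)

/-- `I_n^+(λ) = (-1)^{n-1} e^{λ²/2} w^{(n-1)}(λ/√2) / √((n-1)! 2^{n+1})`. -/
noncomputable def Iplus (lam : ℂ) (n : ℕ) : ℂ :=
  ((-1) ^ (n - 1) * Complex.exp (lam ^ 2 / 2)
      * iteratedDeriv (n - 1) faddeeva (lam / (Real.sqrt 2 : ℂ)))
    / (Real.sqrt ((n - 1).factorial * 2 ^ (n + 1)) : ℂ)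

/-- `I_n^-(λ) = e^{λ²/2} w^{(n-1)}(-λ/√2) / √((n-1)! 2^{n+1})`. -/
noncomputable def Iminus (lam : ℂ) (n : ℕ) : ℂ :=
  (Complex.exp (lam ^ 2 / 2) * iteratedDeriv (n - 1) faddeeva (-lam / (Real.sqrt 2 : ℂ)))
    / (Real.sqrt ((n - 1).factorial * 2 ^ (n + 1)) : ℂ)

/-! The Faddeeva function satisfies `w' = -2 z w + 2i/√π` (differentiate `erfc` under the
integral sign), so its derivatives obey `w⁽ᵐ⁺²⁾ = -2 z w⁽ᵐ⁺¹⁾ - 2 (m + 1) w⁽ᵐ⁾`. Hence `w⁽ᵐ⁾(z)` and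
`w⁽ᵐ⁾(-z)` both solve `y'' + 2 z y' + 2 (m + 1) y = 0`, and by Abel's identity their Wronskian is
`e^{-z²}` times its value at `0`, which the recurrence reduces to `-2 (-2)ᵐ m! w(0) w'(0)` with
`w(0) = 1` (Gaussian integral). At `z = λ/√2` the discrete Wronskian of `I^±` is, up to the
normalising constants, exactly this Wronskian. -/

open MeasureTheory Set Filter Topology
open scoped Nat

theorem hasDerivAt_cexp_neg_sq (u : ℂ) :
    HasDerivAt (fun w : ℂ => cexp (-w ^ 2)) (cexp (-u ^ 2) * (-2 * u)) u :=
  (hasDerivAt_pow 2 u).fun_neg.cexp.congr_deriv (by push_cast; ring)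

theorem norm_cexp_neg_add_sq (w : ℂ) (t : ℝ) :
    ‖cexp (-(w + t) ^ 2)‖ = Real.exp (w.im ^ 2 - (w.re + t) ^ 2) := by
  rw [Complex.norm_exp]
  congr 1
  simp [sq]

theorem norm_cexp_neg_add_sq_le {w : ℂ} {a : ℝ} (hw : ‖w‖ ≤ a) (t : ℝ) :
    ‖cexp (-(w + t) ^ 2)‖ ≤ Real.exp (a ^ 2) * Real.exp (-(1 / 2) * t ^ 2) := by
  have hsq : w.re ^ 2 + w.im ^ 2 ≤ a ^ 2 := by
    have hnorm := pow_le_pow_left₀ (norm_nonneg w) hw 2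
    rw [Complex.sq_norm, Complex.normSq_apply] at hnorm
    linarith [sq w.re, sq w.im]
  rw [norm_cexp_neg_add_sq, ← Real.exp_add, Real.exp_le_exp]
  -- `(w.re + t)² ≥ t²/2 - w.re²`
  nlinarith [sq_nonneg (w.re + t / 2)]

theorem integrable_cexp_neg_add_sq (z : ℂ) : Integrable fun t : ℝ => cexp (-(z + t) ^ 2) :=
  ((integrable_exp_neg_mul_sq (by norm_num : (0 : ℝ) < 1 / 2)).const_mul _).mono'
    (by fun_prop) (.of_forall (norm_cexp_neg_add_sq_le le_rfl))

theorem integrable_add_abs_mul_exp_neg_mul_sq {b : ℝ} (hb : 0 < b) (a : ℝ) :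
    Integrable fun t : ℝ => (a + |t|) * Real.exp (-b * t ^ 2) := by
  refine (((integrable_exp_neg_mul_sq hb).const_mul a).add
    (integrable_mul_exp_neg_mul_sq hb).norm).congr (.of_forall fun t => ?_)
  simp only [Pi.add_apply, norm_mul, Real.norm_eq_abs, abs_of_pos (Real.exp_pos _)]
  ring

theorem norm_cexp_neg_add_sq_mul_le {w : ℂ} {a : ℝ} (hw : ‖w‖ ≤ a) (t : ℝ) :
    ‖cexp (-(w + t) ^ 2) * (-2 * (w + t))‖
      ≤ 2 * Real.exp (a ^ 2) * ((a + |t|) * Real.exp (-(1 / 2) * t ^ 2)) := by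
  have hlin : ‖-2 * (w + t)‖ ≤ 2 * (a + |t|) := by
    rw [norm_mul, norm_neg, Complex.norm_two]
    gcongr
    exact (norm_add_le _ _).trans (by simpa using hw)
  calc ‖cexp (-(w + t) ^ 2) * (-2 * (w + t))‖
      ≤ Real.exp (a ^ 2) * Real.exp (-(1 / 2) * t ^ 2) * (2 * (a + |t|)) := by
        rw [norm_mul]
        exact mul_le_mul (norm_cexp_neg_add_sq_le hw t) hlin (norm_nonneg _) (by positivity)
    _ = 2 * Real.exp (a ^ 2) * ((a + |t|) * Real.exp (-(1 / 2) * t ^ 2)) := by ring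

theorem integrable_cexp_neg_add_sq_mul (z : ℂ) :
    Integrable fun t : ℝ => cexp (-(z + t) ^ 2) * (-2 * (z + t)) :=
  ((integrable_add_abs_mul_exp_neg_mul_sq (by norm_num) ‖z‖).const_mul _).mono' (by fun_prop)
    (.of_forall (norm_cexp_neg_add_sq_mul_le le_rfl))

theorem hasDerivAt_setIntegral_cexp_neg_add_sq (s : Set ℝ) (z : ℂ) :
    HasDerivAt (fun w : ℂ => ∫ t in s, cexp (-(w + t) ^ 2))
      (∫ t in s, cexp (-(z + t) ^ 2) * (-2 * (z + t))) z := by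
  refine (hasDerivAt_integral_of_dominated_loc_of_deriv_le
    (F' := fun w (t : ℝ) => cexp (-(w + t) ^ 2) * (-2 * (w + t))) (Metric.ball_mem_nhds z one_pos)
    (.of_forall fun w => (integrable_cexp_neg_add_sq w).aestronglyMeasurable.restrict)
    (integrable_cexp_neg_add_sq z).integrableOn
    (integrable_cexp_neg_add_sq_mul z).aestronglyMeasurable.restrict
    (.of_forall fun t w hw => norm_cexp_neg_add_sq_mul_le ?_ t)
    ((integrable_add_abs_mul_exp_neg_mul_sq (by norm_num) (‖z‖ + 1)).const_mul _).integrableOn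
    (.of_forall fun t w _ => (hasDerivAt_cexp_neg_sq (w + t)).comp_add_const w (t : ℂ))).2
  rw [Metric.mem_ball, dist_eq] at hw
  linarith [norm_le_norm_add_norm_sub' w z]

theorem tendsto_cexp_neg_add_sq_atTop (z : ℂ) :
    Tendsto (fun t : ℝ => cexp (-(z + t) ^ 2)) atTop (𝓝 0) := by
  rw [tendsto_zero_iff_norm_tendsto_zero]
  simp only [norm_cexp_neg_add_sq]
  refine Real.tendsto_exp_atBot.comp (tendsto_atBot_add_const_left _ _ ?_)
  exact tendsto_neg_atTop_atBot.comp
    ((tendsto_pow_atTop two_ne_zero).comp (tendsto_atTop_add_const_left _ _ tendsto_id))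

theorem integral_Ioi_cexp_neg_add_sq_mul (z : ℂ) :
    ∫ t in Ioi (0 : ℝ), cexp (-(z + t) ^ 2) * (-2 * (z + t)) = -cexp (-z ^ 2) := by
  rw [integral_Ioi_of_hasDerivAt_of_tendsto (by fun_prop)
    (fun t _ => ((hasDerivAt_cexp_neg_sq (z + t)).comp_const_add z (t : ℂ)).comp_ofReal)
    (integrable_cexp_neg_add_sq_mul z).integrableOn (tendsto_cexp_neg_add_sq_atTop z)]
  simp

theorem hasDerivAt_cerfc (z : ℂ) :
    HasDerivAt cerfc (-(2 / (Real.sqrt Real.pi : ℂ)) * cexp (-z ^ 2)) z := by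
  have h := (hasDerivAt_setIntegral_cexp_neg_add_sq (Ioi 0) z).const_mul
    (2 / (Real.sqrt Real.pi : ℂ))
  rw [integral_Ioi_cexp_neg_add_sq_mul] at h
  exact h.congr_deriv (by ring)

theorem cerfc_zero : cerfc 0 = 1 := by
  have h : ∫ t in Ioi (0 : ℝ), cexp (-(0 + t) ^ 2) = (Real.sqrt Real.pi / 2 : ℝ) := by
    have hgauss := integral_gaussian_Ioi 1
    rw [div_one] at hgauss
    rw [← hgauss, ← integral_complex_ofReal]
    push_cast
    simp
  rw [cerfc, h]
  push_cast
  field_simp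

theorem hasDerivAt_faddeeva (z : ℂ) :
    HasDerivAt faddeeva (-2 * z * faddeeva z + 2 * I / (Real.sqrt Real.pi : ℂ)) z := by
  have hin : HasDerivAt (fun w : ℂ => -I * w) (-I) z := by
    simpa using (hasDerivAt_id z).const_mul (-I)
  have hexp : cexp (-z ^ 2) * cexp (-(-I * z) ^ 2) = 1 := by
    rw [← Complex.exp_add]; ring_nf; simp
  refine ((hasDerivAt_cexp_neg_sq z).fun_mul
    ((hasDerivAt_cerfc (-I * z)).comp z hin)).congr_deriv ?_
  simp only [Function.comp_apply, faddeeva]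
  linear_combination (2 * I / (Real.sqrt Real.pi : ℂ)) * hexp

theorem faddeeva_zero : faddeeva 0 = 1 := by
  simp [faddeeva, cerfc_zero]

section HermiteRecurrence

variable {f : ℂ → ℂ} {c : ℂ}

theorem hasDerivAt_iteratedDeriv (hf : Differentiable ℂ f) (m : ℕ) (z : ℂ) :
    HasDerivAt (iteratedDeriv m f) (iteratedDeriv (m + 1) f z) z := by
  rw [iteratedDeriv_succ]
  exact ((hf.contDiff (n := ⊤)).differentiable_iteratedDeriv m (by simp) z).hasDerivAt

theorem iteratedDeriv_add_two_of_eq (hf : Differentiable ℂ f) {n : ℕ} {q q' : ℂ → ℂ}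
    (hq : ∀ z, HasDerivAt q (q' z) z)
    (h : ∀ z, iteratedDeriv (n + 1) f z = -2 * z * iteratedDeriv n f z + q z) (z : ℂ) :
    iteratedDeriv (n + 2) f z
      = -2 * z * iteratedDeriv (n + 1) f z - 2 * iteratedDeriv n f z + q' z := by
  have hd := (((hasDerivAt_id' z).const_mul (-2)).fun_mul (hasDerivAt_iteratedDeriv hf n z)).fun_add
    (hq z)
  rw [← funext h] at hd
  rw [iteratedDeriv_succ, hd.deriv]
  ring

theorem iteratedDeriv_add_two_eq (hf : ∀ z, HasDerivAt f (-2 * z * f z + c) z) (m : ℕ) (z : ℂ) :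
    iteratedDeriv (m + 2) f z
      = -2 * z * iteratedDeriv (m + 1) f z - 2 * (m + 1) * iteratedDeriv m f z := by
  have hdiff : Differentiable ℂ f := fun z => (hf z).differentiableAt
  induction m generalizing z with
  | zero =>
    simpa using iteratedDeriv_add_two_of_eq hdiff (n := 0) (fun _ => hasDerivAt_const _ c)
      (fun z => by rw [iteratedDeriv_one, (hf z).deriv, iteratedDeriv_zero]) z
  | succ m ih =>
    rw [iteratedDeriv_add_two_of_eq hdiff
      (fun z => (hasDerivAt_iteratedDeriv hdiff m z).const_mul (-2 * ((m : ℂ) + 1)))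
      (fun z => by rw [ih]; ring) z]
    push_cast
    ring

theorem cexp_sq_mul_wronskian_eq {u u' v v' : ℂ → ℂ} {k : ℂ}
    (hu : ∀ z, HasDerivAt u (u' z) z) (hu' : ∀ z, HasDerivAt u' (-2 * z * u' z - k * u z) z)
    (hv : ∀ z, HasDerivAt v (v' z) z) (hv' : ∀ z, HasDerivAt v' (-2 * z * v' z - k * v z) z)
    (z : ℂ) :
    cexp (z ^ 2) * (u z * v' z - u' z * v z) = u 0 * v' 0 - u' 0 * v 0 := by
  have hW : ∀ z, HasDerivAt (fun z => cexp (z ^ 2) * (u z * v' z - u' z * v z)) 0 z := fun z =>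
    ((hasDerivAt_pow 2 z).cexp.fun_mul (((hu z).fun_mul (hv' z)).fun_sub
      ((hu' z).fun_mul (hv z)))).congr_deriv (by push_cast; ring)
  simpa using
    is_const_of_deriv_eq_zero (fun z => (hW z).differentiableAt) (fun z => (hW z).deriv) z 0

theorem iteratedDeriv_mul_iteratedDeriv_succ_zero (hf : ∀ z, HasDerivAt f (-2 * z * f z + c) z)
    (m : ℕ) : iteratedDeriv m f 0 * iteratedDeriv (m + 1) f 0 = (-2) ^ m * m ! * (f 0 * c) := by
  induction m with
  | zero => simp [(hf 0).deriv]
  | succ m ih =>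
    rw [iteratedDeriv_add_two_eq hf]
    push_cast [Nat.factorial_succ]
    linear_combination (-2 * ((m : ℂ) + 1)) * ih

theorem iteratedDeriv_mul_iteratedDeriv_succ_neg_add
    (hf : ∀ z, HasDerivAt f (-2 * z * f z + c) z) (m : ℕ) (z : ℂ) :
    iteratedDeriv m f z * iteratedDeriv (m + 1) f (-z)
        + iteratedDeriv (m + 1) f z * iteratedDeriv m f (-z)
      = 2 * (-2) ^ m * m ! * (f 0 * c) * cexp (-z ^ 2) := by
  have hdiff : Differentiable ℂ f := fun z => (hf z).differentiableAt
  have hD := hasDerivAt_iteratedDeriv hdiff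
  have hrec := iteratedDeriv_add_two_eq hf m
  have habel := cexp_sq_mul_wronskian_eq (k := 2 * ((m : ℂ) + 1)) (hD m)
    (fun z => (hD (m + 1) z).congr_deriv (hrec z))
    (v := fun z => iteratedDeriv m f (-z)) (v' := fun z => -iteratedDeriv (m + 1) f (-z))
    (fun z => ((hD m (-z)).comp z (hasDerivAt_neg z)).congr_deriv (by ring))
    (fun z => ((hD (m + 1) (-z)).comp z (hasDerivAt_neg z)).neg.congr_deriv
      (by rw [hrec]; ring)) z
  have hexp : cexp (z ^ 2) * cexp (-z ^ 2) = 1 := by rw [← Complex.exp_add]; simp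
  simp only [neg_zero] at habel
  linear_combination (-cexp (-z ^ 2)) * habel
    - (iteratedDeriv m f z * iteratedDeriv (m + 1) f (-z)
        + iteratedDeriv (m + 1) f z * iteratedDeriv m f (-z)) * hexp
    + 2 * cexp (-z ^ 2) * iteratedDeriv_mul_iteratedDeriv_succ_zero hf m

end HermiteRecurrence

theorem sqrt_factorial_mul_two_pow_mul_sqrt (m : ℕ) :
    √(m ! * 2 ^ (m + 2)) * √((m + 1) ! * 2 ^ (m + 3)) = m ! * 2 ^ (m + 2) * √2 * √(m + 1) := by
  rw [← Real.sqrt_mul (by positivity), mul_assoc _ (√2), ← Real.sqrt_mul zero_le_two,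
    show (m ! * 2 ^ (m + 2) * ((m + 1) ! * 2 ^ (m + 3)) : ℝ)
        = (m ! * 2 ^ (m + 2)) ^ 2 * (2 * (m + 1)) by push_cast [Nat.factorial_succ]; ring,
    Real.sqrt_mul (by positivity), Real.sqrt_sq (by positivity)]

theorem Iplus_mul_Iminus_sub (lam : ℂ) (m : ℕ) :
    Iplus lam (m + 1) * Iminus lam (m + 2) - Iplus lam (m + 2) * Iminus lam (m + 1)
      = (-1) ^ m * cexp (lam ^ 2 / 2) ^ 2
        * (iteratedDeriv m faddeeva (lam / √2) * iteratedDeriv (m + 1) faddeeva (-(lam / √2))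
          + iteratedDeriv (m + 1) faddeeva (lam / √2) * iteratedDeriv m faddeeva (-(lam / √2)))
        / (√(m ! * 2 ^ (m + 2)) * √((m + 1) ! * 2 ^ (m + 3)) : ℝ) := by
  simp only [Iplus, Iminus, Nat.add_sub_cancel, neg_div, Complex.ofReal_mul]
  push_cast
  ring

/-- The discrete Wronskian of `I^+(λ)` and `I^-(λ)` equals `i e^{λ²/2}/√(2π)` for every
`n ≥ 1`; in particular it is constant and nonzero. -/
theorem wronskian_Iplus_Iminus (lam : ℂ) (n : ℕ) (hn : 1 ≤ n) :
    (Real.sqrt (n : ℝ) : ℂ)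
        * (Iplus lam n * Iminus lam (n + 1) - Iplus lam (n + 1) * Iminus lam n)
      = Complex.I * Complex.exp (lam ^ 2 / 2) / (Real.sqrt (2 * Real.pi) : ℂ) := by
  obtain ⟨m, rfl⟩ : ∃ m, n = m + 1 := ⟨n - 1, by omega⟩
  have hG := iteratedDeriv_mul_iteratedDeriv_succ_neg_add hasDerivAt_faddeeva m (lam / √2)
  have hexp : cexp (lam ^ 2 / 2) * cexp (-(lam / √2) ^ 2) = 1 := by
    rw [← Complex.exp_add, div_pow, ← Complex.ofReal_pow, Real.sq_sqrt zero_le_two]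
    simp
  have hsign : (-1 : ℂ) ^ m * (-2) ^ m = 2 ^ m := by rw [← mul_pow]; norm_num
  have h2pi : (√(2 * Real.pi) : ℂ) = √2 * √Real.pi := by
    rw [Real.sqrt_mul zero_le_two, Complex.ofReal_mul]
  have hfac : (m ! : ℂ) ≠ 0 := by exact_mod_cast m.factorial_ne_zero
  rw [show m + 1 + 1 = m + 2 from rfl, Iplus_mul_Iminus_sub, sqrt_factorial_mul_two_pow_mul_sqrt,
    hG, faddeeva_zero, h2pi]
  generalize cexp (-(lam / √2) ^ 2) = e at hexp
  push_cast
  field_simp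
  linear_combination 4 * cexp (lam ^ 2 / 2) * e * hsign + 4 * 2 ^ m * hexp
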